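/- Let K be a field of characteristic zero, V a finite-dimensional super-vector space with dim V_0 > 0 and dim V_1 > 0, and n ≥ 1. Then the space of sl(V)-invariants in V^{⊗n} is zero, where the Lie superalgebra sl(V) (even and odd endomorphisms of supertrace zero) acts on V^{⊗n} by super-derivations. Consequently, for a quiver vertex that is a source and ordinary (both graded components of its superspace nonzero), there are no nonzero multilinear semi-invariants involving only outgoing edges at that vertex. -/

import Mathlib

open Module
open scoped TensorProduct

variable (K : Type) [Field K]
variable (V₀ V₁ : Type) [AddCommGroup V₀] [AddCommGroup V₁]
  [Module K V₀] [Module K V₁]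

/-- The grading involution `J` of `V = V₀ ⊕ V₁`: identity on `V₀`, minus the
identity on `V₁`.  For homogeneous `v`, `J v = (−1)^{|v|} v`. -/
def gradeInv : (V₀ × V₁) →ₗ[K] (V₀ × V₁) :=
  (LinearMap.fst K V₀ V₁).prod (-(LinearMap.snd K V₀ V₁))

/-- `J^p` for a parity `p`. -/
def gradeInvPow (p : ZMod 2) : (V₀ × V₁) →ₗ[K] (V₀ × V₁) :=
  if p = 0 then LinearMap.id else gradeInv K V₀ V₁

/-- A homogeneous endomorphism of parity `p` of the super-vector space
`V = V₀ ⊕ V₁`. -/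
def IsHomogEnd (φ : (V₀ × V₁) →ₗ[K] (V₀ × V₁)) (p : ZMod 2) : Prop :=
  if p = 0 then
    (∀ v : V₀, (φ (v, 0)).2 = 0) ∧ (∀ v : V₁, (φ (0, v)).1 = 0)
  else
    (∀ v : V₀, (φ (v, 0)).1 = 0) ∧ (∀ v : V₁, (φ (0, v)).2 = 0)

/-- The supertrace of an endomorphism of `V = V₀ ⊕ V₁`:
`tr(φ₀₀) − tr(φ₁₁)`. -/
noncomputable def strEnd (φ : (V₀ × V₁) →ₗ[K] (V₀ × V₁)) : K :=
  LinearMap.trace K V₀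
      ((LinearMap.fst K V₀ V₁).comp (φ.comp (LinearMap.inl K V₀ V₁))) -
    LinearMap.trace K V₁
      ((LinearMap.snd K V₀ V₁).comp (φ.comp (LinearMap.inr K V₀ V₁)))

/-- The action of a homogeneous endomorphism `φ` of parity `p` on `V^{⊗n}` as a
super-derivation:
`φ(v₁ ⊗ ⋯ ⊗ vₙ) = Σᵢ (−1)^{|φ|(|v₁|+⋯+|v_{i−1}|)} v₁ ⊗ ⋯ ⊗ φ(vᵢ) ⊗ ⋯ ⊗ vₙ`,
implemented by twisting the factors before position `i` with `J^p`. -/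
noncomputable def superDerAction (n : ℕ) (φ : (V₀ × V₁) →ₗ[K] (V₀ × V₁))
    (p : ZMod 2) :
    (⨂[K] (_ : Fin n), (V₀ × V₁)) →ₗ[K] ⨂[K] (_ : Fin n), (V₀ × V₁) :=
  ∑ i : Fin n, PiTensorProduct.map (fun k =>
    if k < i then gradeInvPow K V₀ V₁ p else if k = i then φ else LinearMap.id)

/-!
The even endomorphism `φ = d₁ • 1 ⊕ d₀ • 1` of `V = V₀ ⊕ V₁`, where `dᵢ = dim Vᵢ`, has
supertrace `d₁ d₀ - d₀ d₁ = 0`, so it lies in `sl(V)`. Being even, it acts on `V^{⊗n}` as an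
ordinary derivation, which is diagonal in the tensor basis built from a homogeneous basis of
`V`: the eigenvalue on `e_{s₁} ⊗ ⋯ ⊗ e_{sₙ}` is a sum of `n ≥ 1` positive integers, hence
nonzero in characteristic zero. So `φ` acts injectively on `V^{⊗n}` and kills no nonzero tensor.
-/

open Function PiTensorProduct

theorem Module.Basis.injective_of_apply_eq_smul {R M ι : Type*} [Field R] [AddCommMonoid M]
    [Module R M] (b : Basis ι R M) (L : M →ₗ[R] M) (c : ι → R) (hc : ∀ i, c i ≠ 0)
    (hL : ∀ i, L (b i) = c i • b i) : Function.Injective L := by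
  let D : M →ₗ[R] M := b.constr R fun i => (c i)⁻¹ • b i
  have hDL : D ∘ₗ L = LinearMap.id := b.ext fun i => by
    simp [D, hL, smul_smul, hc i]
  exact LeftInverse.injective (g := D) fun x => congr($hDL x)

section TensorDerivation

variable {R M ι κ : Type*} [AddCommMonoid M] [Fintype ι] [DecidableEq ι]

noncomputable def tensorDerivation [CommSemiring R] [Module R M] (φ : M →ₗ[R] M) :
    (⨂[R] _ : ι, M) →ₗ[R] ⨂[R] _ : ι, M :=
  ∑ i, map (update (fun _ => LinearMap.id) i φ)

theorem tensorDerivation_tprod_of_apply_eq_smul [CommSemiring R] [Module R M] (φ : M →ₗ[R] M)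
    (e : κ → M) (w : κ → R) (he : ∀ s, φ (e s) = w s • e s) (f : ι → κ) :
    tensorDerivation φ (tprod R fun k => e (f k)) =
      (∑ i, w (f i)) • tprod R fun k => e (f k) := by
  simp only [tensorDerivation, LinearMap.sum_apply, map_tprod, Finset.sum_smul]
  refine Finset.sum_congr rfl fun i _ => ?_
  have hfactors : (fun k => update (fun _ => LinearMap.id) i φ k (e (f k)))
      = update (fun k => e (f k)) i (w (f i) • e (f i)) := by
    ext k
    rcases eq_or_ne k i with rfl | hk <;> simp [*]
  rw [hfactors, MultilinearMap.map_update_smul, update_eq_self]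

theorem tensorDerivation_injective [Field R] [CharZero R] [Module R M] [Nonempty ι]
    (φ : M →ₗ[R] M) (e : Basis κ R M) (w : κ → ℕ) (hw : ∀ s, 0 < w s)
    (he : ∀ s, φ (e s) = (w s : R) • e s) : Injective (tensorDerivation (ι := ι) φ) := by
  refine (Basis.piTensorProduct fun _ => e).injective_of_apply_eq_smul _
    (fun f => ((∑ i, w (f i) : ℕ) : R)) (fun f => ?_) (fun f => ?_)
  · exact Nat.cast_ne_zero.mpr (Finset.sum_pos (fun i _ => hw (f i)) Finset.univ_nonempty).ne'
  · rw [Basis.piTensorProduct_apply, Nat.cast_sum]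
    exact tensorDerivation_tprod_of_apply_eq_smul φ e _ he f

end TensorDerivation

theorem superDerAction_even_eq_tensorDerivation (n : ℕ)
    (φ : (V₀ × V₁) →ₗ[K] (V₀ × V₁)) :
    superDerAction K V₀ V₁ n φ 0 = tensorDerivation φ := by
  refine Finset.sum_congr rfl fun i _ => congrArg map (funext fun k => ?_)
  rcases eq_or_ne k i with rfl | hk
  · simp
  · simp [hk, gradeInvPow]

def gradedScalar (a b : K) : (V₀ × V₁) →ₗ[K] (V₀ × V₁) :=
  (a • LinearMap.fst K V₀ V₁).prod (b • LinearMap.snd K V₀ V₁)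

theorem isHomogEnd_gradedScalar (a b : K) :
    IsHomogEnd K V₀ V₁ (gradedScalar K V₀ V₁ a b) 0 := by
  simp [IsHomogEnd, gradedScalar]

theorem strEnd_gradedScalar [FiniteDimensional K V₀] [FiniteDimensional K V₁] (a b : K) :
    strEnd K V₀ V₁ (gradedScalar K V₀ V₁ a b) = a * finrank K V₀ - b * finrank K V₁ := by
  have h₀ : LinearMap.fst K V₀ V₁ ∘ₗ gradedScalar K V₀ V₁ a b ∘ₗ LinearMap.inl K V₀ V₁ =
      a • LinearMap.id := by
    ext; simp [gradedScalar]
  have h₁ : LinearMap.snd K V₀ V₁ ∘ₗ gradedScalar K V₀ V₁ a b ∘ₗ LinearMap.inr K V₀ V₁ =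
      b • LinearMap.id := by
    ext; simp [gradedScalar]
  simp [strEnd, h₀, h₁]

theorem gradedScalar_apply_basis_prod {ι₀ ι₁ : Type*} (b₀ : Basis ι₀ K V₀) (b₁ : Basis ι₁ K V₁)
    (a b : K) (s : ι₀ ⊕ ι₁) :
    gradedScalar K V₀ V₁ a b (b₀.prod b₁ s) =
      Sum.elim (fun _ => a) (fun _ => b) s • b₀.prod b₁ s := by
  rcases s with j | j <;> simp [gradedScalar]

/-- a special case of Sergeev's theorem: over a field of
characteristic zero, if both `V₀` and `V₁` are nonzero and `n ≥ 1`, then the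
space of `sl(V)`-invariants in `V^{⊗n}` is zero. -/
theorem stmt_14 [CharZero K] [FiniteDimensional K V₀] [FiniteDimensional K V₁]
    (h₀ : 0 < finrank K V₀) (h₁ : 0 < finrank K V₁) (n : ℕ) (hn : 1 ≤ n)
    (t : ⨂[K] (_ : Fin n), (V₀ × V₁))
    (ht : ∀ (φ : (V₀ × V₁) →ₗ[K] (V₀ × V₁)) (p : ZMod 2),
      IsHomogEnd K V₀ V₁ φ p → strEnd K V₀ V₁ φ = 0 →
      superDerAction K V₀ V₁ n φ p t = 0) :
    t = 0 := by
  have : Nonempty (Fin n) := ⟨⟨0, hn⟩⟩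
  let φ := gradedScalar K V₀ V₁ (finrank K V₁) (finrank K V₀)
  have hφt : tensorDerivation φ t = 0 := by
    rw [← superDerAction_even_eq_tensorDerivation]
    refine ht φ 0 (isHomogEnd_gradedScalar K V₀ V₁ _ _) ?_
    rw [strEnd_gradedScalar, mul_comm, sub_self]
  have hφ_inj : Injective (tensorDerivation (ι := Fin n) φ) :=
    tensorDerivation_injective φ ((Module.finBasis K V₀).prod (Module.finBasis K V₁))
      (Sum.elim (fun _ => finrank K V₁) (fun _ => finrank K V₀))
      (by rintro (_ | _) <;> assumption)
      (by rintro (_ | _) <;> exact gradedScalar_apply_basis_prod K V₀ V₁ _ _ _ _ _)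
  exact hφ_inj (hφt.trans (map_zero _).symm)
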